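/- Let (X, ρ) be a metric space, λ ∈ Δ∞, and x = (x_k)_{k∈ℕ} a sequence in X. Then the set Γ_x(λ) of λ-statistical cluster points of x is a closed subset of X. (This is the paper's Theorem 4.4, specialized to the PM space induced by a metric, where F_{xy} = ε_{ρ(x,y)} and the strong topology is the metric topology.) -/

import Mathlib

open Filter Topology

/-- `l` belongs to the class `Δ∞`: a nondecreasing (for indices `≥ 1`) sequence of
positive reals tending to `∞` with `l 1 = 1` and `l (n+1) ≤ l n + 1`. -/
def DeltaInfty (l : ℕ → ℝ) : Prop :=
  (∀ n, 1 ≤ n → 0 < l n) ∧ (∀ m n, 1 ≤ m → m ≤ n → l m ≤ l n) ∧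
    Tendsto l atTop atTop ∧ l 1 = 1 ∧ ∀ n, 1 ≤ n → l (n + 1) ≤ l n + 1

open Classical in
/-- The number of elements of `M` in the window `I_n = [n - l n + 1, n] ∩ ℕ`. -/
noncomputable def lamCount (l : ℕ → ℝ) (M : Set ℕ) (n : ℕ) : ℕ :=
  ((Finset.Icc 1 n).filter (fun (k : ℕ) => ((n : ℝ) - l n + 1 ≤ (k : ℝ)) ∧ k ∈ M)).card

/-- `M ⊆ ℕ` has `λ`-density `r`: `|{k ∈ I_n : k ∈ M}| / l n → r`. -/
def lamDensity (l : ℕ → ℝ) (M : Set ℕ) (r : ℝ) : Prop :=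
  Tendsto (fun n => (lamCount l M n : ℝ) / l n) atTop (𝓝 r)

/-- `Y` is a `λ`-statistical cluster point of `x`: for every `t > 0` the set
`{k : dist (x k) Y < t}` does not have `λ`-density zero. -/
def LamStatClusterPt {X : Type*} [MetricSpace X] (l : ℕ → ℝ) (x : ℕ → X) (Y : X) : Prop :=
  ∀ t > 0, ¬ lamDensity l {k | dist (x k) Y < t} 0

/-! If the `t`-ball around `Y` is visited on a set of `λ`-density zero, then for every `Z` in the
`t/2`-ball around `Y` the visits to the `t/2`-ball around `Z` form a subset of it, hence also have
`λ`-density zero: the non-cluster points form an open set. -/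

lemma lamCount_mono (l : ℕ → ℝ) {M N : Set ℕ} (h : M ⊆ N) (n : ℕ) :
    lamCount l M n ≤ lamCount l N n := by
  classical
  exact Finset.card_le_card <| Finset.monotone_filter_right _ fun _ _ hk => ⟨hk.1, h hk.2⟩

-- `|#M / l n| ≤ |#N / l n|` holds whatever the sign of `l n`.
lemma lamDensity_zero_of_subset {l : ℕ → ℝ} {M N : Set ℕ} (h : M ⊆ N)
    (hN : lamDensity l N 0) : lamDensity l M 0 := by
  refine squeeze_zero_norm (fun n => ?_) (by simpa using hN.abs)
  simp only [Real.norm_eq_abs, abs_div, Nat.abs_cast]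
  gcongr
  exact_mod_cast lamCount_mono l h n

lemma isClosed_setOf_forall_not_preimage_ball {X : Type*} [PseudoMetricSpace X]
    (P : Set ℕ → Prop) (hP : ∀ ⦃M N⦄, M ⊆ N → P N → P M) (x : ℕ → X) :
    IsClosed {Y | ∀ t > 0, ¬ P {k | dist (x k) Y < t}} := by
  refine isOpen_compl_iff.mp <| Metric.isOpen_iff.mpr fun Y hY => ?_
  simp only [Set.mem_compl_iff, Set.mem_ofPred_eq, not_forall, not_not] at hY
  obtain ⟨t, ht, hPY⟩ := hY
  refine ⟨t / 2, half_pos ht, fun Z hZ hZcl =>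
    hZcl (t / 2) (half_pos ht) (hP (fun k hk => ?_) hPY)⟩
  calc dist (x k) Y ≤ dist (x k) Z + dist Z Y := dist_triangle _ _ _
    _ < t / 2 + t / 2 := add_lt_add hk hZ
    _ = t := add_halves t

theorem lamStatClusterPts_isClosed_general {X : Type*} [MetricSpace X]
    (l : ℕ → ℝ) (x : ℕ → X) :
    IsClosed {Y | LamStatClusterPt l x Y} :=
  isClosed_setOf_forall_not_preimage_ball (lamDensity l · 0)
    (fun _ _ h hN => lamDensity_zero_of_subset h hN) x

theorem lamStatClusterPts_isClosed {X : Type*} [MetricSpace X]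
    (l : ℕ → ℝ) (hl : DeltaInfty l) (x : ℕ → X) :
    IsClosed {Y | LamStatClusterPt l x Y} :=
  lamStatClusterPts_isClosed_general l x
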